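/- arXiv:0802.2189 — 2 statements merged into one kernel-verified Lean document; each statement's English description precedes it below -/
import Mathlib

section
/- Let C be a Krull-Schmidt category. The transfinite radical rad_C* is the unique maximal idempotent ideal of C which contains no identity morphism of a nonzero object: rad_C* is idempotent, contains no identities of nonzero objects, and every idempotent ideal I containing no identities of nonzero objects satisfies I ⊆ rad_C*. -/
/-!
In a Krull–Schmidt category the radical is the largest ideal containing no identity of a nonzero
object. It contains no such identity because it lies in the ideal of those `f : X ⟶ Y` for which
every `𝟙 X - f ≫ g` is invertible; and an ideal `I` without such identities lies in it because,
once source and target are decomposed into objects with local endomorphism rings, no component of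
a morphism of `I` can be invertible.

The transfinite powers of an ideal `I` decrease, and the ideals of an essentially small category
form a small set, so the powers are constant from some `γ` on; this stable value is `I*`. It is
idempotent because `I^(λ+1) = I^λ · I^λ` for the limit ordinal `λ = γ + ω`. An idempotent `J ⊆ I`
satisfies `J = J · J ⊆ I^β · I^β'` at every successor stage, hence lies in every `I^α`.
-/

open CategoryTheory CategoryTheory.Limits

universe w v u

structure CatIdeal (C : Type u) [Category.{v} C] [Preadditive C] where
  mem : ∀ {X Y : C}, (X ⟶ Y) → Prop
  zero_mem : ∀ {X Y : C}, mem (0 : X ⟶ Y)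
  add_mem : ∀ {X Y : C} {f g : X ⟶ Y}, mem f → mem g → mem (f + g)
  comp_mem_left : ∀ {X Y Z : C} {f : X ⟶ Y} (g : Y ⟶ Z), mem f → mem (f ≫ g)
  comp_mem_right : ∀ {X Y Z : C} (f : X ⟶ Y) {g : Y ⟶ Z}, mem g → mem (f ≫ g)

namespace CatIdeal

variable {C : Type u} [Category.{v} C] [Preadditive C]

instance : LE (CatIdeal C) :=
  ⟨fun I J => ∀ {X Y : C} {f : X ⟶ Y}, I.mem f → J.mem f⟩

/-- The ideal of all morphisms. -/
def top (C : Type u) [Category.{v} C] [Preadditive C] : CatIdeal C where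
  mem _ := True
  zero_mem := trivial
  add_mem := by intros; trivial
  comp_mem_left := by intros; trivial
  comp_mem_right := by intros; trivial

/-- The ideal generated by a class of morphisms. -/
def span (S : ∀ {X Y : C}, (X ⟶ Y) → Prop) : CatIdeal C where
  mem f := ∀ J : CatIdeal C, (∀ {A B : C} {g : A ⟶ B}, S g → J.mem g) → J.mem f
  zero_mem := fun J _ => J.zero_mem
  add_mem := by intro X Y f g hf hg J hS; exact J.add_mem (hf J hS) (hg J hS)
  comp_mem_left := by intro X Y Z f g hf J hS; exact J.comp_mem_left g (hf J hS)
  comp_mem_right := by intro X Y Z f g hg J hS; exact J.comp_mem_right f (hg J hS)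

/-- The product of two ideals: the ideal generated by all composites `g ≫ h`
with `g ∈ I` and `h ∈ J`. -/
def mul (I J : CatIdeal C) : CatIdeal C :=
  span (fun {X Z} f => ∃ (Y : C) (g : X ⟶ Y) (h : Y ⟶ Z), I.mem g ∧ J.mem h ∧ f = g ≫ h)

/-- An ideal is idempotent if it equals its square. -/
def IsIdempotent (I : CatIdeal C) : Prop := I = I.mul I

/-- The intersection of a family of ideals. -/
def iInter {ι : Sort*} (F : ι → CatIdeal C) : CatIdeal C where
  mem f := ∀ i, (F i).mem f
  zero_mem := fun i => (F i).zero_mem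
  add_mem := by intro X Y f g hf hg i; exact (F i).add_mem (hf i) (hg i)
  comp_mem_left := by intro X Y Z f g hf i; exact (F i).comp_mem_left g (hf i)
  comp_mem_right := by intro X Y Z f g hg i; exact (F i).comp_mem_right f (hg i)

/-- Finite powers of an ideal: `npow I n` is the ideal generated by `n`-fold
composites of morphisms from `I` (with `npow I 0` the ideal of all morphisms). -/
def npow (I : CatIdeal C) : ℕ → CatIdeal C
  | 0 => top C
  | n + 1 => (npow I n).mul I

/-- The largest limit-or-zero ordinal `≤ α`, namely `ω * (α / ω)`. -/
noncomputable def limitPart (α : Ordinal.{w}) : Ordinal.{w} :=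
  Ordinal.omega0 * (α / Ordinal.omega0)

theorem limitPart_lt {α : Ordinal.{w}} (h0 : α ≠ 0) (hl : ¬ Order.IsSuccLimit α) :
    limitPart α < α := by
  have hle : limitPart α ≤ α := Ordinal.mul_div_le α Ordinal.omega0
  rcases lt_or_eq_of_le hle with h | h
  · exact h
  · exfalso
    rcases eq_or_ne (α / Ordinal.omega0) 0 with hq | hq
    · exact h0 (by rw [← h]; simp [limitPart, hq])
    · exact hl (by rw [← h]; exact Ordinal.isSuccLimit_mul_left Ordinal.isSuccLimit_omega0 (pos_iff_ne_zero.2 hq))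

end CatIdeal

open Ordinal Classical in
/-- Transfinite powers of an ideal `I`: `tpow I 0` is the ideal of all morphisms,
`tpow I n` (for finite `n ≥ 1`) is the ideal generated by `n`-fold composites of
morphisms from `I`, `tpow I α = ⋂_{β < α} tpow I β` at limit ordinals `α`, and
`tpow I (β + n) = (tpow I β) ^ (n + 1)` for `β` limit and `1 ≤ n < ω`. -/
noncomputable def CatIdeal.tpow {C : Type u} [Category.{v} C] [Preadditive C]
    (I : CatIdeal C) : Ordinal.{w} → CatIdeal C
  | α =>
    if h0 : α = 0 then CatIdeal.top C
    else if hl : Order.IsSuccLimit α then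
      CatIdeal.iInter (fun β : {β : Ordinal.{w} // β < α} =>
        have := β.2
        CatIdeal.tpow I β.1)
    else
      (have : Ordinal.pred α < α :=
        Ordinal.pred_lt_iff_not_isSuccPrelimit.2 (fun hp => hl (Ordinal.isSuccLimit_iff.2 ⟨h0, hp⟩))
       CatIdeal.tpow I (Ordinal.pred α)).mul
        (if Ordinal.omega0 ≤ α then
          have := CatIdeal.limitPart_lt h0 hl
          CatIdeal.tpow I (CatIdeal.limitPart α)
         else I)
  termination_by α => α

namespace CatIdeal

/-- The intersection `I* = ⋂_α I^α` of all transfinite powers of `I`. -/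
noncomputable def tstar {C : Type u} [Category.{v} C] [Preadditive C] (I : CatIdeal C) : CatIdeal C :=
  iInter (fun α : Ordinal.{v} => tpow I α)

end CatIdeal

section KS

open CategoryTheory CategoryTheory.Limits

variable (C : Type u) [Category.{v} C] [Preadditive C]

/-- `X` is a biproduct (finite direct sum) of the finite family `Y`,
witnessed by projections and inclusions. -/
def IsBiproductOf (X : C) {n : ℕ} (Y : Fin n → C) : Prop :=
  ∃ (p : ∀ i, X ⟶ Y i) (s : ∀ i, Y i ⟶ X),
    (∀ i, s i ≫ p i = 𝟙 (Y i)) ∧ (∀ i j, i ≠ j → s i ≫ p j = 0) ∧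
    (∑ i, p i ≫ s i) = 𝟙 X

/-- An object is indecomposable if it is nonzero and has no idempotent endomorphisms
other than `0` and the identity (i.e. it admits no nontrivial direct sum decomposition). -/
def IsIndecomposableObj (X : C) : Prop :=
  ¬ IsZero X ∧ ∀ e : X ⟶ X, e ≫ e = e → e = 0 ∨ e = 𝟙 X

/-- The radical of a Krull-Schmidt category: the ideal generated by all non-invertible
morphisms between indecomposable objects. -/
def catRadical : CatIdeal C :=
  CatIdeal.span (fun {X Y} f => IsIndecomposableObj C X ∧ IsIndecomposableObj C Y ∧ ¬ IsIso f)

/-- The transfinite radical `rad_C* = ⋂_α rad_C^α`. -/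
noncomputable def catTransRadical : CatIdeal C := CatIdeal.tstar (catRadical C)

/-- A Krull-Schmidt category: every object decomposes as a finite direct sum of objects
with local endomorphism rings. -/
def IsKrullSchmidt : Prop :=
  ∀ X : C, ∃ (n : ℕ) (Y : Fin n → C),
    (∀ i, IsLocalRing (End (Y i))) ∧ IsBiproductOf C X Y

/-- Local descending chain condition on ideals: every descending chain of ideals,
evaluated at any fixed pair of objects, stabilizes. -/
def HasLocalDCC : Prop :=
  ∀ (I : ℕ → CatIdeal C), (∀ n, I (n + 1) ≤ I n) →
    ∀ X Y : C, ∃ n, ∀ m, n ≤ m → ∀ f : X ⟶ Y, (I m).mem f ↔ (I n).mem f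

/-- The ideal generated by the identity morphisms of the objects in `S`. -/
def identityIdeal (S : Set C) : CatIdeal C :=
  CatIdeal.span (fun {X Y} f => ∃ h : X = Y, X ∈ S ∧ f = CategoryTheory.eqToHom h)

/-- An ideal is zero if it consists exactly of the zero morphisms. -/
def CatIdeal.IsZeroIdeal {C : Type u} [Category.{v} C] [Preadditive C] (I : CatIdeal C) : Prop :=
  ∀ {X Y : C} {f : X ⟶ Y}, I.mem f → f = 0

end KS

open CategoryTheory.Preadditive

namespace CatIdeal

variable {C : Type u} [Category.{v} C] [Preadditive C]

theorem ext {I J : CatIdeal C} (h : ∀ {X Y : C} (f : X ⟶ Y), I.mem f ↔ J.mem f) : I = J := by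
  obtain ⟨mI, _⟩ := I
  obtain ⟨mJ, _⟩ := J
  obtain rfl : @mI = @mJ := by
    funext X Y f
    exact propext (h f)
  rfl

instance : PartialOrder (CatIdeal C) where
  le_refl _ _ _ _ := id
  le_trans _ _ _ hIJ hJK _ _ _ hf := hJK (hIJ hf)
  le_antisymm _ _ hIJ hJI := ext fun _ => ⟨hIJ, hJI⟩

theorem mem_span {S : ∀ {X Y : C}, (X ⟶ Y) → Prop} {X Y : C} {f : X ⟶ Y} (hf : S f) :
    (span S).mem f :=
  fun _ hS => hS hf

theorem span_le {S : ∀ {X Y : C}, (X ⟶ Y) → Prop} {J : CatIdeal C}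
    (h : ∀ {X Y : C} {f : X ⟶ Y}, S f → J.mem f) : span S ≤ J :=
  fun hf => hf J h

theorem comp_mem_mul {I J : CatIdeal C} {X Y Z : C} {f : X ⟶ Y} {g : Y ⟶ Z}
    (hf : I.mem f) (hg : J.mem g) : (I.mul J).mem (f ≫ g) :=
  mem_span ⟨Y, f, g, hf, hg, rfl⟩

theorem mul_le_left (I J : CatIdeal C) : I.mul J ≤ I :=
  span_le fun ⟨_, _, g, hf, _, hfg⟩ => hfg ▸ I.comp_mem_left g hf

theorem mul_le_right (I J : CatIdeal C) : I.mul J ≤ J :=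
  span_le fun ⟨_, f, _, _, hg, hfg⟩ => hfg ▸ J.comp_mem_right f hg

theorem mul_mono {I I' J J' : CatIdeal C} (hI : I ≤ I') (hJ : J ≤ J') : I.mul J ≤ I'.mul J' :=
  span_le fun ⟨_, _, _, hf, hg, hfg⟩ => hfg ▸ comp_mem_mul (hI hf) (hJ hg)

theorem sum_mem (I : CatIdeal C) {X Y : C} {ι : Type*} (s : Finset ι) {f : ι → (X ⟶ Y)}
    (h : ∀ i ∈ s, I.mem (f i)) : I.mem (∑ i ∈ s, f i) := by
  classical
  induction s using Finset.induction with
  | empty => simpa using I.zero_mem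
  | insert i s hi ih =>
    rw [Finset.sum_insert hi]
    exact I.add_mem (h i (s.mem_insert_self i)) (ih fun j hj => h j (Finset.mem_insert_of_mem hj))

theorem comp_comp_mem_iff (I : CatIdeal C) {X X' Y Y' : C} (a : X' ⟶ X) (f : X ⟶ Y)
    (b : Y ⟶ Y') [IsIso a] [IsIso b] : I.mem (a ≫ f ≫ b) ↔ I.mem f := by
  refine ⟨fun h => ?_, fun h => I.comp_mem_right a (I.comp_mem_left b h)⟩
  simpa using I.comp_mem_right (inv a) (I.comp_mem_left (inv b) h)

instance [EssentiallySmall.{v} C] : Small.{v} (CatIdeal C) := by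
  let e := equivSmallModel C
  refine small_of_injective (f := fun (I : CatIdeal C) (x y : SmallModel C) (g : x ⟶ y) =>
    I.mem (e.inverse.map g)) fun I J hIJ => ext fun {X Y} f => ?_
  have h := congrFun (congrFun (congrFun hIJ (e.functor.obj X)) (e.functor.obj Y))
    (e.functor.map f)
  simpa only [e.inv_fun_map, comp_comp_mem_iff] using h.to_iff

end CatIdeal

namespace Ordinal

theorem exists_forall_ge_eq_of_antitone {β : Type*} [PartialOrder β] [Small.{u} β]
    {f : Ordinal.{u} → β} (hf : Antitone f) : ∃ γ, ∀ α, γ ≤ α → f α = f γ := by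
  choose g hg using fun b : Set.range f => b.2
  refine ⟨⨆ b, g b, fun α hα => le_antisymm (hf hα) ?_⟩
  calc f (⨆ b, g b) ≤ f (g ⟨f α, α, rfl⟩) := hf (Ordinal.le_iSup g _)
    _ = f α := hg _

end Ordinal

namespace CatIdeal

open Ordinal

variable {C : Type u} [Category.{v} C] [Preadditive C] (I : CatIdeal C)

theorem tpow_zero : tpow I (0 : Ordinal.{w}) = top C := by
  rw [tpow, dif_pos rfl]

theorem tpow_of_isSuccLimit {α : Ordinal.{w}} (hα : Order.IsSuccLimit α) :
    tpow I α = iInter fun β : {β : Ordinal.{w} // β < α} => tpow I β.1 := by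
  rw [tpow, dif_neg (isSuccLimit_iff.1 hα).1, dif_pos hα]

theorem tpow_add_one (β : Ordinal.{w}) :
    tpow I (β + 1) =
      (tpow I β).mul (if ω ≤ β + 1 then tpow I (limitPart (β + 1)) else I) := by
  rw [tpow, dif_neg (add_pos_of_right zero_lt_one β).ne',
    dif_neg (Order.not_isSuccLimit_add_one β)]
  simp only [pred_add_one]

theorem tpow_add_one_le (β : Ordinal.{w}) : tpow I (β + 1) ≤ tpow I β := by
  rw [tpow_add_one]
  exact mul_le_left _ _

theorem tpow_one : tpow I (1 : Ordinal.{w}) = (top C).mul I := by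
  rw [← zero_add 1, tpow_add_one, if_neg (not_le.2 (by simp)), tpow_zero]

theorem limitPart_add_one {o : Ordinal.{w}} (ho : Order.IsSuccLimit o) : limitPart (o + 1) = o := by
  obtain ⟨q, rfl⟩ := isSuccPrelimit_iff_omega0_dvd.1 ho.isSuccPrelimit
  rw [limitPart, mul_add_div q omega0_ne_zero 1, div_eq_zero_of_lt one_lt_omega0, add_zero]

theorem tpow_add_one_of_isSuccLimit {o : Ordinal.{w}} (ho : Order.IsSuccLimit o) :
    tpow I (o + 1) = (tpow I o).mul (tpow I o) := by
  rw [tpow_add_one, if_pos ((omega0_le_of_isSuccLimit ho).trans le_self_add),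
    limitPart_add_one ho]

theorem tpow_antitone : Antitone (tpow I : Ordinal.{w} → CatIdeal C) := by
  intro α β hαβ
  induction β using Ordinal.limitRecOn generalizing α with
  | zero => rw [nonpos_iff_eq_zero.1 hαβ]
  | add_one β ih =>
    obtain h | rfl := hαβ.lt_or_eq
    · exact fun hf => ih (Order.lt_add_one_iff.1 h) (tpow_add_one_le I β hf)
    · rfl
  | limit β hβ _ =>
    obtain h | rfl := hαβ.lt_or_eq
    · rw [tpow_of_isSuccLimit I hβ]
      exact fun hf => hf ⟨α, h⟩
    · rfl

theorem le_tpow {J : CatIdeal C} (hJI : J ≤ I) (hJ : J.IsIdempotent) (α : Ordinal.{w}) :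
    J ≤ tpow I α := by
  induction α using WellFoundedLT.induction with
  | _ α ih =>
  obtain rfl | ⟨β, rfl⟩ | hα := zero_or_succ_or_isSuccLimit α
  · rw [tpow_zero]
    exact fun _ => trivial
  · rw [Order.succ_eq_add_one, tpow_add_one, hJ]
    refine mul_mono (ih β (Order.lt_succ β)) ?_
    split_ifs
    · exact ih _ (limitPart_lt (Order.succ_ne_bot β) (Order.not_isSuccLimit_succ β))
    · exact hJI
  · rw [tpow_of_isSuccLimit I hα]
    exact fun hf β => ih β.1 β.2 hf

theorem tstar_le_tpow (α : Ordinal.{v}) : I.tstar ≤ tpow I α :=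
  fun hf => hf α

theorem tstar_le_self : I.tstar ≤ I :=
  fun hf => mul_le_right _ _ (tpow_one I ▸ tstar_le_tpow I 1 hf)

theorem le_tstar_of_isIdempotent {J : CatIdeal C} (hJI : J ≤ I) (hJ : J.IsIdempotent) :
    J ≤ I.tstar :=
  fun hf α => le_tpow I hJI hJ α hf

theorem tstar_eq_tpow {γ : Ordinal.{v}} (hγ : ∀ α, γ ≤ α → tpow I α = tpow I γ) :
    I.tstar = tpow I γ := by
  refine ext fun f => ⟨fun hf => tstar_le_tpow I γ hf, fun hf α => ?_⟩
  obtain h | h := le_total α γ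
  · exact tpow_antitone I h hf
  · show (tpow I α).mem f
    rwa [hγ α h]

theorem isIdempotent_tstar [Small.{v} (CatIdeal C)] : I.tstar.IsIdempotent := by
  obtain ⟨γ, hγ⟩ := exists_forall_ge_eq_of_antitone
    (tpow_antitone I : Antitone (tpow I : Ordinal.{v} → CatIdeal C))
  have hlim : Order.IsSuccLimit (γ + ω) := isSuccLimit_add γ isSuccLimit_omega0
  calc I.tstar = tpow I (γ + ω + 1) := by
        rw [tstar_eq_tpow I hγ, hγ _ (le_self_add.trans le_self_add)]
    _ = I.tstar.mul I.tstar := by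
        rw [tpow_add_one_of_isSuccLimit I hlim, hγ _ le_self_add, tstar_eq_tpow I hγ]

end CatIdeal

section KrullSchmidt

variable {C : Type u} [Category.{v} C] [Preadditive C]

theorem CatIdeal.mem_of_components (J : CatIdeal C) {X Y : C} {ι κ : Type*} [Fintype ι]
    [Fintype κ] {A : ι → C} {B : κ → C} (p : ∀ i, X ⟶ A i) (s : ∀ i, A i ⟶ X)
    (q : ∀ j, Y ⟶ B j) (t : ∀ j, B j ⟶ Y) (hX : ∑ i, p i ≫ s i = 𝟙 X)
    (hY : ∑ j, q j ≫ t j = 𝟙 Y) {f : X ⟶ Y} (h : ∀ i j, J.mem (s i ≫ f ≫ q j)) :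
    J.mem f := by
  have hf : f = ∑ j, ∑ i, p i ≫ (s i ≫ f ≫ q j) ≫ t j := by
    calc f = (∑ i, p i ≫ s i) ≫ f ≫ ∑ j, q j ≫ t j := by simp [hX, hY]
      _ = _ := by simp only [sum_comp, comp_sum, Category.assoc]
  rw [hf]
  exact J.sum_mem _ fun j _ => J.sum_mem _ fun i _ =>
    J.comp_mem_right _ (J.comp_mem_left _ (h i j))

theorem not_isZero_of_isLocalRing_end {X : C} [IsLocalRing (End X)] : ¬ IsZero X :=
  fun hX => one_ne_zero (α := End X) ((IsZero.iff_id_eq_zero X).1 hX)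

theorem isIso_or_isIso_id_sub {X : C} [IsLocalRing (End X)] (a : X ⟶ X) :
    IsIso a ∨ IsIso (𝟙 X - a) :=
  (IsLocalRing.isUnit_or_isUnit_of_add_one (add_sub_cancel (End.of a) 1)).imp
    (isUnit_iff_isIso _).1 (isUnit_iff_isIso _).1

theorem isIndecomposableObj_of_isLocalRing_end {X : C} [IsLocalRing (End X)] :
    IsIndecomposableObj C X := by
  refine ⟨not_isZero_of_isLocalRing_end, fun e he => ?_⟩
  obtain h | h := isIso_or_isIso_id_sub e
  · exact Or.inr ((cancel_epi e).1 (by rw [he, Category.comp_id]))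
  · exact Or.inl ((cancel_epi (𝟙 X - e)).1 (by simp [sub_comp, he]))

theorem isIso_of_comp_eq_id_of_isIndecomposableObj {X Y : C} {f : X ⟶ Y} {r : Y ⟶ X}
    (h : f ≫ r = 𝟙 X) (hX : ¬ IsZero X) (hY : IsIndecomposableObj C Y) : IsIso f := by
  have hidem : (r ≫ f) ≫ r ≫ f = r ≫ f := by simp [reassoc_of% h]
  obtain h0 | h1 := hY.2 _ hidem
  · refine absurd ((IsZero.iff_id_eq_zero X).2 ?_) hX
    calc 𝟙 X = f ≫ (r ≫ f) ≫ r := by simp [h]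
      _ = 0 := by simp [h0]
  · exact ⟨r, h, h1⟩

theorem isLocalRing_end_of_iso {X Y : C} (e : X ≅ Y) [IsLocalRing (End Y)] :
    IsLocalRing (End X) := by
  have : Nontrivial (End X) := e.conj.toEquiv.nontrivial
  refine IsLocalRing.of_isUnit_or_isUnit_one_sub_self fun a => ?_
  have hsub : e.conj (1 - a) = 1 - e.conj a := by
    simp only [Iso.conj_apply, End.one_def]
    erw [sub_comp, comp_sub]
    simp
  rw [← MulEquiv.isUnit_map e.conj, ← MulEquiv.isUnit_map e.conj (x := 1 - a), hsub]
  exact IsLocalRing.isUnit_or_isUnit_of_add_one (add_sub_cancel _ 1)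

theorem isLocalRing_end_of_isIndecomposableObj (hKS : IsKrullSchmidt C) {X : C}
    (hX : IsIndecomposableObj C X) : IsLocalRing (End X) := by
  obtain ⟨_, Y, hY, p, s, hsp, -, hsum⟩ := hKS X
  obtain ⟨i, hi⟩ : ∃ i, p i ≫ s i = 𝟙 X := by
    by_contra! h
    refine hX.1 ((IsZero.iff_id_eq_zero X).2 ?_)
    rw [← hsum]
    exact Finset.sum_eq_zero fun i _ =>
      (hX.2 _ (by simp [reassoc_of% hsp i])).resolve_right (h i)
  have := hY i
  exact isLocalRing_end_of_iso ⟨p i, s i, hi, hsp i⟩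

theorem isIso_id_sub_comp_swap {X Y : C} {f : X ⟶ Y} {g : Y ⟶ X}
    (h : IsIso (𝟙 X - f ≫ g)) : IsIso (𝟙 Y - g ≫ f) := by
  refine ⟨𝟙 Y + g ≫ inv (𝟙 X - f ≫ g) ≫ f, ?_, ?_⟩
  · calc (𝟙 Y - g ≫ f) ≫ (𝟙 Y + g ≫ inv (𝟙 X - f ≫ g) ≫ f)
        = 𝟙 Y - g ≫ f + g ≫ ((𝟙 X - f ≫ g) ≫ inv (𝟙 X - f ≫ g)) ≫ f := by
          simp only [sub_comp, comp_add, comp_sub, Category.assoc, Category.id_comp,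
            Category.comp_id]
      _ = 𝟙 Y := by rw [IsIso.hom_inv_id, Category.id_comp, sub_add_cancel]
  · calc (𝟙 Y + g ≫ inv (𝟙 X - f ≫ g) ≫ f) ≫ (𝟙 Y - g ≫ f)
        = 𝟙 Y - g ≫ f + g ≫ (inv (𝟙 X - f ≫ g) ≫ (𝟙 X - f ≫ g)) ≫ f := by
          simp only [sub_comp, comp_sub, add_comp, Category.assoc, Category.id_comp,
            Category.comp_id]
          abel
      _ = 𝟙 Y := by rw [IsIso.inv_hom_id, Category.id_comp, sub_add_cancel]

variable (C) in
def jacobsonIdeal : CatIdeal C where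
  mem {X Y} f := ∀ g : Y ⟶ X, IsIso (𝟙 X - f ≫ g)
  zero_mem g := by
    rw [zero_comp, sub_zero]
    infer_instance
  add_mem {X Y f f'} hf hf' g := by
    have : IsIso (𝟙 X - inv (𝟙 X - f ≫ g) ≫ f' ≫ g) :=
      isIso_id_sub_comp_swap (by simpa using hf' (g ≫ inv (𝟙 X - f ≫ g)))
    have heq :
        𝟙 X - (f + f') ≫ g = (𝟙 X - f ≫ g) ≫ (𝟙 X - inv (𝟙 X - f ≫ g) ≫ f' ≫ g) := by
      rw [comp_sub, IsIso.hom_inv_id_assoc, Category.comp_id, add_comp]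
      abel
    rw [heq]
    infer_instance
  comp_mem_left {X Y Z f} g hf h := by
    rw [Category.assoc]
    exact hf (g ≫ h)
  comp_mem_right {X Y Z} f {g} hg h := by
    rw [Category.assoc]
    exact isIso_id_sub_comp_swap (by simpa using hg (h ≫ f))

theorem not_id_mem_jacobsonIdeal {X : C} (hX : ¬ IsZero X) : ¬ (jacobsonIdeal C).mem (𝟙 X) :=
  fun h => hX ((IsZero.iff_id_eq_zero X).2 (isIsoZeroSelfEquiv X (by simpa using h (𝟙 X))))

theorem catRadical_le_jacobsonIdeal (hKS : IsKrullSchmidt C) : catRadical C ≤ jacobsonIdeal C :=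
  CatIdeal.span_le fun ⟨hX, hY, hf⟩ g => by
    have := isLocalRing_end_of_isIndecomposableObj hKS hX
    refine (isIso_or_isIso_id_sub _).resolve_left fun hfg => hf ?_
    exact isIso_of_comp_eq_id_of_isIndecomposableObj (r := g ≫ inv (_ ≫ g))
      (by rw [← Category.assoc, IsIso.hom_inv_id]) hX.1 hY

theorem not_id_mem_catRadical (hKS : IsKrullSchmidt C) {X : C} (hX : ¬ IsZero X) :
    ¬ (catRadical C).mem (𝟙 X) :=
  fun h => not_id_mem_jacobsonIdeal hX (catRadical_le_jacobsonIdeal hKS h)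

theorem le_catRadical (hKS : IsKrullSchmidt C) {I : CatIdeal C}
    (hI : ∀ X : C, ¬ IsZero X → ¬ I.mem (𝟙 X)) : I ≤ catRadical C := by
  intro X Y f hf
  obtain ⟨_, A, hA, p, s, -, -, hsumA⟩ := hKS X
  obtain ⟨_, B, hB, q, t, -, -, hsumB⟩ := hKS Y
  refine (catRadical C).mem_of_components p s q t hsumA hsumB fun i j => ?_
  have := hA i
  have := hB j
  refine CatIdeal.mem_span ⟨isIndecomposableObj_of_isLocalRing_end,
    isIndecomposableObj_of_isLocalRing_end, fun hiso => hI (A i) not_isZero_of_isLocalRing_end ?_⟩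
  have h := I.comp_mem_left (inv (s i ≫ f ≫ q j))
    (I.comp_mem_right (s i) (I.comp_mem_left (q j) hf))
  rwa [IsIso.hom_inv_id] at h

end KrullSchmidt

open CategoryTheory in
theorem stmt3_general {C : Type u} [CategoryTheory.Category.{v} C] [CategoryTheory.Preadditive C] [CategoryTheory.EssentiallySmall.{v} C] (hKS : IsKrullSchmidt C) :
    (catTransRadical C).IsIdempotent ∧
      (∀ X : C, ¬ CategoryTheory.Limits.IsZero X → ¬ (catTransRadical C).mem (𝟙 X)) ∧
      (∀ I : CatIdeal C, I.IsIdempotent →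
        (∀ X : C, ¬ CategoryTheory.Limits.IsZero X → ¬ I.mem (𝟙 X)) →
        I ≤ catTransRadical C) := by
  exact ⟨(catRadical C).isIdempotent_tstar,
    fun X hX h => not_id_mem_catRadical hKS hX ((catRadical C).tstar_le_self h),
    fun I hI hno => (catRadical C).le_tstar_of_isIdempotent (le_catRadical hKS hno) hI⟩

open CategoryTheory in
/-- In a Krull-Schmidt category, the transfinite radical is the unique
maximal idempotent ideal containing no identity morphisms of nonzero objects. -/
theorem stmt3 {C : Type u} [CategoryTheory.Category.{v} C] [CategoryTheory.Preadditive C] [CategoryTheory.Limits.HasFiniteBiproducts C] [CategoryTheory.EssentiallySmall.{v} C] (hKS : IsKrullSchmidt C) :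
    (catTransRadical C).IsIdempotent ∧
      (∀ X : C, ¬ CategoryTheory.Limits.IsZero X → ¬ (catTransRadical C).mem (𝟙 X)) ∧
      (∀ I : CatIdeal C, I.IsIdempotent →
        (∀ X : C, ¬ CategoryTheory.Limits.IsZero X → ¬ I.mem (𝟙 X)) →
        I ≤ catTransRadical C) :=
  stmt3_general hKS
end

section
/- Let Λ be a ring, S a set of finitely presented left Λ-modules, and M a module possessing an S-filtration (M_α | α ≤ σ). Then for any submodule N ⊆ M appearing in the filtration and any finite subset X ⊆ M, there exists a submodule P ⊆ M such that N ∪ X ⊆ P, P/N is finitely presented, and P/N is S-filtered. -/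
universe u

variable {R : Type u} [Ring R]

/-- `F` is an `S`-filtration of `M` of length `σ`: a continuous well-ordered chain of
submodules starting at `0`, ending at `M`, with consecutive quotients isomorphic to
modules from `S`. -/
def IsSFiltration {M : Type u} [AddCommGroup M] [Module R M]
    (S : Set (ModuleCat.{u} R)) (σ : Ordinal.{u}) (F : Ordinal.{u} → Submodule R M) : Prop :=
  F 0 = ⊥ ∧ F σ = ⊤ ∧
  (∀ α β : Ordinal.{u}, α ≤ β → β ≤ σ → F α ≤ F β) ∧
  (∀ α : Ordinal.{u}, α ≤ σ → Order.IsSuccLimit α → F α = ⨆ β : Set.Iio α, F β) ∧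
  (∀ α : Ordinal.{u}, α < σ → ∃ N ∈ S,
    Nonempty ((↥(F (α + 1)) ⧸ Submodule.comap (F (α + 1)).subtype (F α)) ≃ₗ[R] ↥N))

/-- A module is `S`-filtered if it possesses at least one `S`-filtration. -/
def IsSFiltered (S : Set (ModuleCat.{u} R)) (M : Type u) [AddCommGroup M] [Module R M] : Prop :=
  ∃ (σ : Ordinal.{u}) (F : Ordinal.{u} → Submodule R M), IsSFiltration S σ F

/-! For each `α < σ` pick `G α` with `F α ⊔ G α = F (α + 1)` and `F α ⊓ G α` finitely generated;
this is possible because `F (α + 1) / F α` is finitely presented. Call a finite set `T` of indices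
closed if `F α ⊓ G α ≤ ⨆ β ∈ T, β < α, G β` for every `α ∈ T`. By transfinite induction every
finitely generated submodule of `F α` lies in `⨆ β ∈ T, G β` for some closed `T` below `α`.
Take such a `T` for the span of `X` and put `P = F γ ⊔ ⨆ β ∈ T, G β`. Adding the `G β` with
`β ∈ T`, `β ≥ γ`, one at a time in increasing order, closedness and the modular law make each
step a copy of `F (β + 1) / F β`; this finite `S`-filtration of `P / F γ` shows that `P / F γ` is
finitely presented and `S`-filtered. -/

open Submodule

section Quotients

variable {W W' : Type*} [AddCommGroup W] [Module R W] [AddCommGroup W'] [Module R W']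

def IsSQuotient (S : Set (ModuleCat.{u} R)) (A B : Submodule R W) : Prop :=
  ∃ K ∈ S, Nonempty ((↥B ⧸ comap B.subtype A) ≃ₗ[R] ↥K)

variable {S : Set (ModuleCat.{u} R)} {A B C D : Submodule R W}

theorem IsSQuotient.finitePresentation (hS : ∀ N ∈ S, Module.FinitePresentation R N)
    (h : IsSQuotient S A B) : Module.FinitePresentation R (↥B ⧸ comap B.subtype A) := by
  obtain ⟨K, hK, ⟨e⟩⟩ := h
  have := hS K hK
  exact .of_equiv e.symm

theorem IsSQuotient.of_inf_eq_of_sup_eq (h : IsSQuotient S C D) (hinf : B ⊓ C = A)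
    (hsup : B ⊔ C = D) : IsSQuotient S A B := by
  subst hinf hsup
  obtain ⟨K, hK, ⟨e⟩⟩ := h
  exact ⟨K, hK, ⟨(LinearMap.quotientInfEquivSupQuotient B C).trans e⟩⟩

noncomputable def quotientMapEquiv (f : W →ₗ[R] W') (hker : LinearMap.ker f ≤ A) :
    (↥(B.map f) ⧸ comap (B.map f).subtype (A.map f)) ≃ₗ[R] (↥B ⧸ comap B.subtype A) :=
  let g : ↥B →ₗ[R] ↥(B.map f) ⧸ comap (B.map f).subtype (A.map f) :=
    (comap (B.map f).subtype (A.map f)).mkQ ∘ₗ f.restrict fun _ hx => mem_map_of_mem hx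
  have hg : Function.Surjective g := by
    rintro ⟨⟨_, x, hx, rfl⟩⟩
    exact ⟨⟨x, hx⟩, rfl⟩
  have hkerg : LinearMap.ker g = comap B.subtype A := by
    ext x
    simp [g, ← mem_comap (f := f), comap_map_eq_self hker]
  ((quotEquivOfEq _ _ hkerg.symm).trans (g.quotKerEquivOfSurjective hg)).symm

theorem isSQuotient_map_iff (f : W →ₗ[R] W') (hker : LinearMap.ker f ≤ A) :
    IsSQuotient S (A.map f) (B.map f) ↔ IsSQuotient S A B :=
  let e := quotientMapEquiv (B := B) f hker
  ⟨fun ⟨K, hK, ⟨e'⟩⟩ => ⟨K, hK, ⟨e.symm.trans e'⟩⟩,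
    fun ⟨K, hK, ⟨e'⟩⟩ => ⟨K, hK, ⟨e.trans e'⟩⟩⟩

end Quotients

section Chains

variable {W : Type*} [AddCommGroup W] [Module R W]

def IsSChain (S : Set (ModuleCat.{u} R)) (c : ℕ → Submodule R W) (n : ℕ) : Prop :=
  Monotone c ∧ ∀ i < n, IsSQuotient S (c i) (c (i + 1))

variable {S : Set (ModuleCat.{u} R)} {c : ℕ → Submodule R W} {n : ℕ}

theorem IsSChain.exists_snoc {B : Submodule R W} (hc : IsSChain S c n) (hB : c n ≤ B)
    (h : IsSQuotient S (c n) B) :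
    ∃ c' : ℕ → Submodule R W, IsSChain S c' (n + 1) ∧ c' 0 = c 0 ∧ c' (n + 1) = B := by
  refine ⟨fun i => if i ≤ n then c i else B, ⟨fun i j hij => ?_, fun i hi => ?_⟩, by simp, by simp⟩
  · by_cases hj : j ≤ n
    · simp only [hj, hij.trans hj, if_true]
      exact hc.1 hij
    · by_cases hi : i ≤ n
      · simpa [hi, hj] using (hc.1 hi).trans hB
      · simp [hi, hj]
  · rcases (Nat.lt_succ_iff.mp hi).lt_or_eq with hi | rfl
    · simpa [hi.le, Nat.succ_le_of_lt hi] using hc.2 i hi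
    · simpa using h

theorem IsSChain.isSFiltered {Q : Type u} [AddCommGroup Q] [Module R Q]
    {D : ℕ → Submodule R Q} (hD : IsSChain S D n) (h0 : D 0 = ⊥) (hn : D n = ⊤) :
    IsSFiltered S Q := by
  let F : Ordinal.{u} → Submodule R Q := fun β => ⨆ (i : ℕ) (_ : (i : Ordinal) ≤ β), D i
  have hF : ∀ j : ℕ, F j = D j := fun j =>
    le_antisymm (iSup₂_le fun i hi => hD.1 (by exact_mod_cast hi)) (le_iSup₂_of_le j le_rfl le_rfl)
  refine ⟨n, F, ?_, by rw [hF, hn], fun α β hαβ _ => ?_, fun α hα hlim => ?_, fun α hα => ?_⟩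
  · simpa [h0] using hF 0
  · exact iSup₂_mono' fun i hi => ⟨i, hi.trans hαβ, le_rfl⟩
  · exact absurd (hα.trans_lt (Ordinal.natCast_lt_omega0 n))
      (Ordinal.omega0_le_of_isSuccLimit hlim).not_gt
  · obtain ⟨i, rfl⟩ := Ordinal.lt_omega0.mp (hα.trans (Ordinal.natCast_lt_omega0 n))
    rw [← Nat.cast_succ, hF, hF]
    exact hD.2 i (by exact_mod_cast hα)

theorem IsSChain.finitePresentation (hS : ∀ N ∈ S, Module.FinitePresentation R N)
    {Q : Type*} [AddCommGroup Q] [Module R Q] {D : ℕ → Submodule R Q}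
    (hD : IsSChain S D n) (h0 : D 0 = ⊥) (hn : D n = ⊤) : Module.FinitePresentation R Q := by
  have hDi : ∀ i ≤ n, Module.FinitePresentation R (D i) := by
    intro i hi
    induction i with
    | zero => rw [h0]; infer_instance
    | succ i ih =>
      have := ih (by omega)
      have := (hD.2 i hi).finitePresentation hS
      let π := (comap (D (i + 1)).subtype (D i)).mkQ
      have : Module.FinitePresentation R (LinearMap.ker π) := by
        rw [ker_mkQ]
        exact .of_equiv (comapSubtypeEquivOfLe (hD.1 i.le_succ)).symm
      exact Module.finitePresentation_of_ker π (mkQ_surjective _)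
  have := hDi n le_rfl
  rw [hn] at this
  exact .of_equiv topEquiv

theorem IsSChain.exists_quotient (hc : IsSChain S c n) :
    ∃ D : ℕ → Submodule R (↥(c n) ⧸ comap (c n).subtype (c 0)),
      IsSChain S D n ∧ D 0 = ⊥ ∧ D n = ⊤ := by
  set N := comap (c n).subtype (c 0)
  refine ⟨fun i => map N.mkQ (comap (c n).subtype (c i)),
    ⟨fun i j hij => map_mono (comap_mono (hc.1 hij)), fun i hi => ?_⟩, mkQ_map_self N, by simp⟩
  have hker : LinearMap.ker N.mkQ ≤ comap (c n).subtype (c i) := by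
    rw [ker_mkQ]
    exact comap_mono (hc.1 (Nat.zero_le i))
  rw [isSQuotient_map_iff _ hker, ← isSQuotient_map_iff (c n).subtype (by simp),
    map_comap_subtype, map_comap_subtype, inf_eq_right.mpr (hc.1 hi.le),
    inf_eq_right.mpr (hc.1 hi)]
  exact hc.2 i hi

end Chains

section Generators

variable {W : Type*} [AddCommGroup W] [Module R W]

theorem Submodule.exists_sup_eq_top_and_fg_inf (A : Submodule R W)
    [Module.FinitePresentation R (W ⧸ A)] : ∃ G : Submodule R W, A ⊔ G = ⊤ ∧ (A ⊓ G).FG := by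
  obtain ⟨s, hs⟩ := Module.Finite.fg_top (R := R) (M := W ⧸ A)
  let G := span R (Function.surjInv A.mkQ_surjective '' s)
  have hG : map A.mkQ G = ⊤ := by
    rw [map_span, ← Set.image_comp, Function.comp_surjInv, Set.image_id, hs]
  have : Module.Finite R G := Module.Finite.span_of_finite R (s.finite_toSet.image _)
  have hsurj : Function.Surjective (A.mkQ ∘ₗ G.subtype) := by
    rw [← LinearMap.range_eq_top, LinearMap.range_comp, range_subtype, hG]
  refine ⟨G, (map_mkQ_eq_top A G).mp hG, ?_⟩
  have hker := Module.FinitePresentation.fg_ker _ hsurj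
  rw [LinearMap.ker_comp, ker_mkQ] at hker
  simpa [map_comap_subtype, inf_comm] using hker.map G.subtype

theorem Submodule.exists_sup_eq_and_fg_inf {A B : Submodule R W} (hAB : A ≤ B)
    [Module.FinitePresentation R (↥B ⧸ comap B.subtype A)] :
    ∃ G : Submodule R W, A ⊔ G = B ∧ (A ⊓ G).FG := by
  obtain ⟨G, hsup, hinf⟩ := (comap B.subtype A).exists_sup_eq_top_and_fg_inf
  have hA : map B.subtype (comap B.subtype A) = A := by
    rw [map_comap_subtype, inf_eq_right.mpr hAB]
  refine ⟨map B.subtype G, ?_, ?_⟩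
  · rw [← hA, ← map_sup, hsup, map_top, range_subtype]
  · rw [← hA, ← map_inf _ B.injective_subtype]
    exact hinf.map _

end Generators

section Finiteness

variable {W : Type*} [AddCommGroup W] [Module R W] {K : Submodule R W}

theorem Submodule.FG.exists_le_of_le_sup (hK : K.FG) {A B : Submodule R W} (h : K ≤ A ⊔ B) :
    ∃ K' : Submodule R W, K'.FG ∧ K' ≤ A ∧ K ≤ K' ⊔ B := by
  induction K, hK using fg_induction with
  | singleton x =>
    obtain ⟨a, ha, b, hb, rfl⟩ := mem_sup.mp (h (mem_span_singleton_self x))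
    refine ⟨R ∙ a, fg_span_singleton a, (span_singleton_le_iff_mem a A).mpr ha, ?_⟩
    exact (span_singleton_le_iff_mem _ _).mpr
      (add_mem_sup (mem_span_singleton_self a) hb)
  | sup K₁ K₂ _ _ ih₁ ih₂ =>
    obtain ⟨K₁', hK₁', hK₁'A, hK₁⟩ := ih₁ (le_sup_left.trans h)
    obtain ⟨K₂', hK₂', hK₂'A, hK₂⟩ := ih₂ (le_sup_right.trans h)
    refine ⟨K₁' ⊔ K₂', hK₁'.sup hK₂', sup_le hK₁'A hK₂'A, sup_le ?_ ?_⟩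
    · exact hK₁.trans (sup_le_sup_right le_sup_left B)
    · exact hK₂.trans (sup_le_sup_right le_sup_right B)

theorem Submodule.FG.exists_le_of_le_iSup (hK : K.FG) {ι : Type*} [Nonempty ι]
    {f : ι → Submodule R W} (hf : Directed (· ≤ ·) f) (h : K ≤ ⨆ i, f i) : ∃ i, K ≤ f i := by
  obtain ⟨-, ⟨i, rfl⟩, hi⟩ :=
    (CompleteLattice.isCompactElement_iff_le_of_directed_sSup_le (α := Submodule R W) K).mp
      ((fg_iff_compact K).mp hK) (Set.range f) (Set.range_nonempty f) (directedOn_range.mpr hf) h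
  exact ⟨i, hi⟩

end Finiteness

section HillClosed

variable {M : Type*} [AddCommGroup M] [Module R M] (F G : Ordinal.{u} → Submodule R M)

def IsHillClosed (T : Finset Ordinal.{u}) : Prop :=
  ∀ α ∈ T, F α ⊓ G α ≤ ⨆ β ∈ T.filter (· < α), G β

variable {F G}

theorem isHillClosed_insert_iff {T : Finset Ordinal.{u}} {δ : Ordinal.{u}} (hT : ∀ β ∈ T, β < δ) :
    IsHillClosed F G (insert δ T) ↔ F δ ⊓ G δ ≤ ⨆ β ∈ T, G β ∧ IsHillClosed F G T := by
  have hδ : (insert δ T).filter (· < δ) = T := by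
    rw [Finset.filter_insert, if_neg (lt_irrefl δ), Finset.filter_true_of_mem hT]
  have hT' : ∀ α ∈ T, (insert δ T).filter (· < α) = T.filter (· < α) := fun α hα => by
    rw [Finset.filter_insert, if_neg (hT α hα).asymm]
  simp only [IsHillClosed, Finset.forall_mem_insert, hδ]
  exact and_congr_right fun _ => forall₂_congr fun α hα => by rw [hT' α hα]

end HillClosed

section Filtration

variable {S : Set (ModuleCat.{u} R)} {M : Type u} [AddCommGroup M] [Module R M] {σ : Ordinal.{u}}
  {F G : Ordinal.{u} → Submodule R M}

theorem IsSFiltration.exists_sup_eq_and_fg_inf (hS : ∀ N ∈ S, Module.FinitePresentation R N)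
    (hF : IsSFiltration S σ F) :
    ∃ G : Ordinal.{u} → Submodule R M, ∀ α < σ, F α ⊔ G α = F (α + 1) ∧ (F α ⊓ G α).FG := by
  obtain ⟨-, -, hmono, -, hquot⟩ := hF
  have : ∀ α, ∃ G : Submodule R M, α < σ → F α ⊔ G = F (α + 1) ∧ (F α ⊓ G).FG := fun α => by
    by_cases hα : α < σ
    · have := IsSQuotient.finitePresentation hS (hquot α hα)
      obtain ⟨G, hG⟩ := Submodule.exists_sup_eq_and_fg_inf
        (hmono α _ (lt_add_one α).le (Order.add_one_le_of_lt hα))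
      exact ⟨G, fun _ => hG⟩
    · exact ⟨⊥, fun h => absurd h hα⟩
  choose G hG using this
  exact ⟨G, hG⟩

theorem IsSFiltration.exists_isHillClosed (hF : IsSFiltration S σ F)
    (hG : ∀ α < σ, F α ⊔ G α = F (α + 1)) (hFG : ∀ α < σ, (F α ⊓ G α).FG) {α : Ordinal.{u}}
    (hα : α ≤ σ) {K : Submodule R M} (hK : K.FG) (hKα : K ≤ F α) :
    ∃ T : Finset Ordinal.{u}, (∀ β ∈ T, β < α) ∧ IsHillClosed F G T ∧ K ≤ ⨆ β ∈ T, G β := by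
  obtain ⟨h0, -, hmono, hlim, -⟩ := hF
  induction α using Ordinal.limitRecOn generalizing K with
  | zero => exact ⟨∅, by simp, by simp [IsHillClosed], by simpa [h0] using hKα⟩
  | add_one δ ih =>
    have hδ : δ < σ := (lt_add_one δ).trans_le hα
    obtain ⟨K', hK', hK'δ, hKK'⟩ := hK.exists_le_of_le_sup (hKα.trans (hG δ hδ).ge)
    obtain ⟨T, hTδ, hT, hK'T⟩ := ih hδ.le (hK'.sup (hFG δ hδ)) (sup_le hK'δ inf_le_left)
    refine ⟨insert δ T, ?_, (isHillClosed_insert_iff hTδ).mpr ⟨le_sup_right.trans hK'T, hT⟩, ?_⟩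
    · intro β hβ
      rcases Finset.mem_insert.mp hβ with rfl | hβ
      exacts [lt_add_one β, (hTδ β hβ).trans (lt_add_one δ)]
    · rw [Finset.iSup_insert, sup_comm]
      exact hKK'.trans (sup_le_sup_right (le_sup_left.trans hK'T) _)
  | limit α hlim' ih =>
    have : Nonempty (Set.Iio α) := ⟨⟨0, hlim'.bot_lt⟩⟩
    have hdir : Directed (· ≤ ·) fun β : Set.Iio α => F β := fun β₁ β₂ =>
      have h : max β₁.1 β₂.1 < α := max_lt β₁.2 β₂.2
      ⟨⟨_, h⟩, hmono _ _ (le_max_left _ _) (h.le.trans hα),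
        hmono _ _ (le_max_right _ _) (h.le.trans hα)⟩
    obtain ⟨⟨β, hβα⟩, hKβ⟩ := hK.exists_le_of_le_iSup hdir (hlim α hα hlim' ▸ hKα)
    obtain ⟨T, hTβ, hT, hKT⟩ := ih β hβα (hβα.le.trans hα) hK hKβ
    exact ⟨T, fun x hx => (hTβ x hx).trans hβα, hT, hKT⟩

theorem IsSFiltration.exists_isSChain (hF : IsSFiltration S σ F)
    (hG : ∀ α < σ, F α ⊔ G α = F (α + 1)) {γ : Ordinal.{u}} (hγ : γ ≤ σ) {T : Finset Ordinal.{u}}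
    (hTσ : ∀ β ∈ T, β < σ) (hT : IsHillClosed F G T) :
    ∃ (n : ℕ) (c : ℕ → Submodule R M), IsSChain S c n ∧ c 0 = F γ ∧ c n = F γ ⊔ ⨆ β ∈ T, G β := by
  obtain ⟨-, -, hmono, -, hquot⟩ := hF
  have hGF : ∀ {α β}, α < β → β ≤ σ → G α ≤ F β := fun hαβ hβ =>
    (le_sup_right.trans (hG _ (hαβ.trans_le hβ)).le).trans
      (hmono _ _ (Order.add_one_le_of_lt hαβ) hβ)
  classical
  induction T using Finset.induction_on_max with
  | empty => exact ⟨0, fun _ => F γ, ⟨monotone_const, by simp⟩, rfl, by simp⟩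
  | insert β T hβ ih =>
    have hβσ := hTσ β (Finset.mem_insert_self β T)
    obtain ⟨hβT, hT⟩ := (isHillClosed_insert_iff hβ).mp hT
    obtain ⟨n, c, hc, hc0, hcn⟩ := ih (fun x hx => hTσ x (Finset.mem_insert_of_mem hx)) hT
    rw [Finset.iSup_insert]
    rcases lt_or_ge β γ with hβγ | hγβ
    · refine ⟨n, c, hc, hc0, ?_⟩
      rw [hcn, sup_left_comm, sup_eq_right.mpr ((hGF hβγ hγ).trans le_sup_left)]
    set Q := F γ ⊔ ⨆ x ∈ T, G x with hQ_def
    have hQ : Q ≤ F β := sup_le (hmono _ _ hγβ hβσ.le) (iSup₂_le fun x hx => hGF (hβ x hx) hβσ.le)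
    have hstep : IsSQuotient S (c n) (Q ⊔ G β) := by
      rw [hcn]
      refine IsSQuotient.of_inf_eq_of_sup_eq (hquot β hβσ) ?_ ?_
      · rw [sup_inf_assoc_of_le _ hQ, inf_comm, sup_eq_left.mpr (hβT.trans le_sup_right)]
      · rw [sup_right_comm, sup_eq_right.mpr hQ, hG β hβσ]
    obtain ⟨c', hc', hc'0, hc'n⟩ := hc.exists_snoc (B := Q ⊔ G β) (hcn ▸ le_sup_left) hstep
    refine ⟨n + 1, c', hc', hc'0.trans hc0, hc'n.trans ?_⟩
    rw [hQ_def]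
    ac_rfl

end Filtration

/-- For a module `M` with an `S`-filtration by finitely presented modules,
any member `N = F γ` of the filtration and any finite subset `X ⊆ M` are contained in a
submodule `P` such that `P/N` is finitely presented and `S`-filtered. -/
theorem stmt10 (S : Set (ModuleCat.{u} R))
    (hS : ∀ N ∈ S, Module.FinitePresentation R N)
    {M : Type u} [AddCommGroup M] [Module R M]
    (σ : Ordinal.{u}) (F : Ordinal.{u} → Submodule R M) (hF : IsSFiltration S σ F)
    (γ : Ordinal.{u}) (hγ : γ ≤ σ) (X : Finset M) :
    ∃ P : Submodule R M, F γ ≤ P ∧ (X : Set M) ⊆ (P : Set M) ∧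
      Module.FinitePresentation R (↥P ⧸ Submodule.comap P.subtype (F γ)) ∧
      IsSFiltered S (↥P ⧸ Submodule.comap P.subtype (F γ)) := by
  obtain ⟨G, hG⟩ := hF.exists_sup_eq_and_fg_inf hS
  obtain ⟨T, hTσ, hT, hXT⟩ := hF.exists_isHillClosed (fun α hα => (hG α hα).1)
    (fun α hα => (hG α hα).2) le_rfl (fg_span X.finite_toSet) (hF.2.1 ▸ le_top)
  obtain ⟨n, c, hc, hc0, hcn⟩ := hF.exists_isSChain (fun α hα => (hG α hα).1) hγ hTσ hT
  obtain ⟨D, hD, hD0, hDn⟩ := hc.exists_quotient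
  refine ⟨c n, hc0 ▸ hc.1 (Nat.zero_le n), ?_, ?_, ?_⟩
  · rw [hcn]
    exact subset_span.trans (hXT.trans le_sup_right)
  · rw [← hc0]
    exact hD.finitePresentation hS hD0 hDn
  · rw [← hc0]
    exact hD.isSFiltered hD0 hDn
end
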